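/- arXiv:2211.01977 — 6 statements merged into one kernel-verified Lean document; each statement's English description precedes it below -/
import Mathlib

section
/- Let S ⊆ T be ΣΔ-rings with S ΣΔ-simple. Then S and T^{ΣΔ} are linearly disjoint over S^{ΣΔ}: any finite family of elements of T^{ΣΔ} that is linearly independent over S^{ΣΔ} remains linearly independent over S inside T. -/
/-- If S ⊆ T are ΣΔ-rings with S ΣΔ-simple, then S and the constants T^{ΣΔ}
are linearly disjoint over S^{ΣΔ}: any finite family of constants of T that is
linearly independent over S^{ΣΔ} remains linearly independent over S. -/
theorem stmt_1 (T : Type*) [CommRing T]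
    (Sa : Set (T ≃+* T)) (Da : Set (Derivation ℤ T T))
    (hcommσσ : ∀ σ₁ ∈ Sa, ∀ σ₂ ∈ Sa, ∀ r : T, σ₁ (σ₂ r) = σ₂ (σ₁ r))
    (hcommδδ : ∀ δ₁ ∈ Da, ∀ δ₂ ∈ Da, ∀ r : T, δ₁ (δ₂ r) = δ₂ (δ₁ r))
    (hcommσδ : ∀ σ ∈ Sa, ∀ δ ∈ Da, ∀ r : T, σ (δ r) = δ (σ r))
    (S : Subring T)
    (hSσ : ∀ σ ∈ Sa, ∀ x ∈ S, σ x ∈ S)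
    (hSσ' : ∀ σ ∈ Sa, ∀ x ∈ S, σ.symm x ∈ S)
    (hSδ : ∀ δ ∈ Da, ∀ x ∈ S, δ x ∈ S)
    (hsimple : ∀ J : Set T, J ⊆ S → (0:T) ∈ J →
      (∀ a ∈ J, ∀ b ∈ J, a + b ∈ J) → (∀ s ∈ S, ∀ a ∈ J, s * a ∈ J) →
      (∀ σ ∈ Sa, ∀ a ∈ J, σ a ∈ J) → (∀ δ ∈ Da, ∀ a ∈ J, δ a ∈ J) →
      J = {0} ∨ (1:T) ∈ J)
    (n : ℕ) (c : Fin n → T)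
    (hc : ∀ i, (∀ σ ∈ Sa, σ (c i) = c i) ∧ (∀ δ ∈ Da, δ (c i) = 0))
    (hindep : ∀ b : Fin n → T,
      (∀ i, b i ∈ S ∧ (∀ σ ∈ Sa, σ (b i) = b i) ∧ (∀ δ ∈ Da, δ (b i) = 0)) →
      (∑ i, b i * c i) = 0 → ∀ i, b i = 0) :
    ∀ a : Fin n → T, (∀ i, a i ∈ S) → (∑ i, a i * c i) = 0 → ∀ i, a i = 0 := by
  classical
  intro a ha hsum
  by_cases h10 : (1 : T) = 0
  · intro i
    calc a i = a i * 1 := (mul_one _).symm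
    _ = 0 := by rw [h10, mul_zero]
  by_contra hcon
  push_neg at hcon
  obtain ⟨j0, hj0⟩ := hcon
  -- applying a σ to a relation gives a relation
  have hσsum : ∀ σ ∈ Sa, ∀ b : Fin n → T, (∑ i, b i * c i) = 0 →
      (∑ i, σ (b i) * c i) = 0 := by
    intro σ hσ b hb
    have h1 : σ (∑ i, b i * c i) = ∑ i, σ (b i) * c i := by
      rw [map_sum]
      exact Finset.sum_congr rfl fun i _ => by rw [map_mul, (hc i).1 σ hσ]
    rw [← h1, hb, map_zero]
  have hδsum : ∀ δ ∈ Da, ∀ b : Fin n → T, (∑ i, b i * c i) = 0 →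
      (∑ i, δ (b i) * c i) = 0 := by
    intro δ hδ b hb
    have h1 : δ (∑ i, b i * c i) = ∑ i, δ (b i) * c i := by
      rw [map_sum]
      refine Finset.sum_congr rfl fun i _ => ?_
      rw [Derivation.leibniz, (hc i).2 δ hδ]
      simp [smul_eq_mul, mul_comm]
    rw [← h1, hb, map_zero]
  -- minimal support among nonzero relations
  have hexist : ∃ k : ℕ, ∃ b : Fin n → T, (∀ i, b i ∈ S) ∧ (∑ i, b i * c i) = 0 ∧
      b ≠ 0 ∧ (Finset.univ.filter fun i => b i ≠ 0).card = k :=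
    ⟨_, a, ha, hsum, fun h => hj0 (congrFun h j0), rfl⟩
  set m := Nat.find hexist with hm
  obtain ⟨b, hbS, hbsum, hbne, hbcard⟩ := Nat.find_spec hexist
  have hmin : ∀ b' : Fin n → T, (∀ i, b' i ∈ S) → (∑ i, b' i * c i) = 0 → b' ≠ 0 →
      m ≤ (Finset.univ.filter fun i => b' i ≠ 0).card := fun b' h1 h2 h3 =>
    Nat.find_min' hexist ⟨b', h1, h2, h3, rfl⟩
  obtain ⟨j, hj⟩ : ∃ j, b j ≠ 0 := by
    by_contra h
    push_neg at h
    exact hbne (funext h)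
  -- the ΣΔ-ideal of j-th coefficients of relations supported in supp b
  set J : Set T := {x | ∃ b' : Fin n → T, (∀ i, b' i ∈ S) ∧ (∑ i, b' i * c i) = 0 ∧
    (∀ i, b i = 0 → b' i = 0) ∧ b' j = x} with hJ
  have hbJ : b j ∈ J := ⟨b, hbS, hbsum, fun i h => h, rfl⟩
  have h1J : (1 : T) ∈ J := by
    rcases hsimple J
      (by rintro x ⟨b', h1, -, -, rfl⟩; exact h1 j)
      ⟨0, fun i => zero_mem S, by simp, fun i _ => rfl, rfl⟩
      (by
        rintro x ⟨b1, h11, h12, h13, rfl⟩ y ⟨b2, h21, h22, h23, rfl⟩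
        refine ⟨fun i => b1 i + b2 i, fun i => add_mem (h11 i) (h21 i), ?_,
          fun i hi => by show b1 i + b2 i = 0; rw [h13 i hi, h23 i hi, add_zero], rfl⟩
        show (∑ i, (b1 i + b2 i) * c i) = 0
        have hdist : (∑ i, (b1 i + b2 i) * c i) =
            (∑ i, b1 i * c i) + ∑ i, b2 i * c i := by
          rw [← Finset.sum_add_distrib]
          exact Finset.sum_congr rfl fun i _ => add_mul _ _ _
        rw [hdist, h12, h22, add_zero])
      (by
        rintro s hs x ⟨b', h1, h2, h3, rfl⟩
        refine ⟨fun i => s * b' i, fun i => mul_mem hs (h1 i), ?_,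
          fun i hi => by show s * b' i = 0; rw [h3 i hi, mul_zero], rfl⟩
        show (∑ i, s * b' i * c i) = 0
        have : ∑ i, s * b' i * c i = s * ∑ i, b' i * c i := by
          rw [Finset.mul_sum]
          exact Finset.sum_congr rfl fun i _ => (mul_assoc _ _ _)
        rw [this, h2, mul_zero])
      (by
        rintro σ hσ x ⟨b', h1, h2, h3, rfl⟩
        exact ⟨fun i => σ (b' i), fun i => hSσ σ hσ _ (h1 i), hσsum σ hσ b' h2,
          fun i hi => by show σ (b' i) = 0; rw [h3 i hi, map_zero], rfl⟩)
      (by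
        rintro δ hδ x ⟨b', h1, h2, h3, rfl⟩
        exact ⟨fun i => δ (b' i), fun i => hSδ δ hδ _ (h1 i), hδsum δ hδ b' h2,
          fun i hi => by show δ (b' i) = 0; rw [h3 i hi, map_zero], rfl⟩) with h | h
    · rw [h] at hbJ
      simp only [Set.mem_singleton_iff] at hbJ
      exact absurd hbJ hj
    · exact h
  obtain ⟨e, heS, hesum, hesupp, hej⟩ := h1J
  -- the support of e equals the support of b
  have hsub : (Finset.univ.filter fun i => e i ≠ 0) ⊆
      (Finset.univ.filter fun i => b i ≠ 0) := by
    intro i hi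
    simp only [Finset.mem_filter, Finset.mem_univ, true_and] at hi ⊢
    exact fun h => hi (hesupp i h)
  have hene : e ≠ 0 := fun h => h10 (hej ▸ congrFun h j)
  have hecard : (Finset.univ.filter fun i => e i ≠ 0).card =
      (Finset.univ.filter fun i => b i ≠ 0).card :=
    le_antisymm (Finset.card_le_card hsub) (hbcard ▸ hmin e heS hesum hene)
  have heq : (Finset.univ.filter fun i => e i ≠ 0) =
      (Finset.univ.filter fun i => b i ≠ 0) :=
    Finset.eq_of_subset_of_card_le hsub hecard.ge
  have hjmem : j ∈ Finset.univ.filter fun i => e i ≠ 0 := by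
    rw [heq]; simp [hj]
  -- key: a relation supported strictly inside supp e must vanish
  have key : ∀ d : Fin n → T, (∀ i, d i ∈ S) → (∑ i, d i * c i) = 0 →
      (∀ i, e i = 0 → d i = 0) → d j = 0 → d = 0 := by
    intro d h1 h2 h3 h4
    by_contra hd
    have h5 : (Finset.univ.filter fun i => d i ≠ 0) ⊆
        (Finset.univ.filter fun i => e i ≠ 0).erase j := by
      intro i hi
      simp only [Finset.mem_filter, Finset.mem_univ, true_and] at hi
      refine Finset.mem_erase.2 ⟨fun h => hi (h ▸ h4), ?_⟩
      simp only [Finset.mem_filter, Finset.mem_univ, true_and]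
      exact fun h => hi (h3 i h)
    have h6 := Finset.card_le_card h5
    rw [Finset.card_erase_of_mem hjmem, hecard] at h6
    have h7 := hmin d h1 h2 hd
    rw [← hm] at hbcard
    have h8 : 0 < (Finset.univ.filter fun i => b i ≠ 0).card :=
      Finset.card_pos.2 ⟨j, by simp [hj]⟩
    omega
  -- e is a family of constants
  have hfix : ∀ σ ∈ Sa, ∀ i, σ (e i) = e i := by
    intro σ hσ i
    have h0 : (fun i => σ (e i) - e i) = 0 := by
      refine key _ (fun i => sub_mem (hSσ σ hσ _ (heS i)) (heS i)) ?_
        (fun i hi => by rw [hi, map_zero, sub_zero]) (by rw [hej, map_one, sub_self])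
      simp only [sub_mul]
      rw [Finset.sum_sub_distrib, hσsum σ hσ e hesum, hesum, sub_zero]
    exact sub_eq_zero.1 (congrFun h0 i)
  have hkill : ∀ δ ∈ Da, ∀ i, δ (e i) = 0 := by
    intro δ hδ i
    have h0 : (fun i => δ (e i)) = 0 := by
      refine key _ (fun i => hSδ δ hδ _ (heS i)) (hδsum δ hδ e hesum)
        (fun i hi => by rw [hi, map_zero]) (by rw [hej]; exact Derivation.map_one_eq_zero δ)
    exact congrFun h0 i
  have hfin := hindep e (fun i => ⟨heS i, fun σ hσ => hfix σ hσ i,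
    fun δ hδ => hkill δ hδ i⟩) hesum j
  rw [hej] at hfin
  exact h10 hfin
end

section
/- Let R = ℚ[y,z] with the ring endomorphism σ fixing ℚ and sending y ↦ 2y, z ↦ 2z. Then: (1) R^σ = ℚ; (2) for all integers i,j ≥ 0, σ^i(y)σ^j(z) − σ^i(z)σ^j(y) = 0; yet (3) y and z are linearly independent over ℚ. Hence the Casoratian-determinant criterion for linear dependence over constants fails when the σ-ring is not σ-simple. -/
/-!
Rescaling every variable by `c` multiplies the coefficient of `x^m` by `c ^ deg m`. When `c` is
not a root of unity, a fixed polynomial therefore has no coefficients outside degree `0`, so the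
constants are just `ℚ`. On the other hand every iterate sends `y, z` to `2^i y, 2^i z`, so all
Casoratian determinants vanish, although `y` and `z` are linearly independent over `ℚ`.
-/

open MvPolynomial

noncomputable def sigma4 : MvPolynomial (Fin 2) ℚ →ₐ[ℚ] MvPolynomial (Fin 2) ℚ :=
  MvPolynomial.aeval (fun i => (MvPolynomial.C 2) * MvPolynomial.X i)

namespace MvPolynomial

variable {σ R : Type*}

section CommSemiring

variable [CommSemiring R]

theorem aeval_C_mul_X_monomial (c : R) (n : σ →₀ ℕ) (a : R) :
    aeval (fun i => C c * X i) (monomial n a) = monomial n (c ^ n.degree * a) := by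
  have hpow : (n.prod fun _ k => C c ^ k : MvPolynomial σ R) = C (c ^ n.degree) := by
    rw [Finsupp.prod, Finset.prod_pow_eq_pow_sum, map_pow, Finsupp.degree_apply]
  rw [aeval_monomial, monomial_eq, algebraMap_eq]
  simp only [mul_pow, Finsupp.prod_mul, hpow, map_mul]
  ring

theorem coeff_aeval_C_mul_X (c : R) (p : MvPolynomial σ R) (m : σ →₀ ℕ) :
    coeff m (aeval (fun i => C c * X i) p) = c ^ m.degree * coeff m p := by
  classical
  induction p using induction_on' with
  | monomial n a =>
    rw [aeval_C_mul_X_monomial, coeff_monomial, coeff_monomial]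
    split_ifs with h
    · rw [h]
    · rw [mul_zero]
  | add p q hp hq => rw [map_add, coeff_add, coeff_add, hp, hq, mul_add]

theorem iterate_aeval_C_mul_X_X (c : R) (n : ℕ) (k : σ) :
    (aeval fun i => C c * X i)^[n] (X k : MvPolynomial σ R) = C (c ^ n) * X k := by
  induction n with
  | zero => simp
  | succ n ih =>
    rw [Function.iterate_succ_apply', ih, map_mul, aeval_C, aeval_X, pow_succ, map_mul,
      algebraMap_eq]
    ring

theorem eq_zero_and_eq_zero_of_C_mul_X_add_C_mul_X_eq_zero {i j : σ} (hij : i ≠ j) {a b : R}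
    (h : C a * X i + C b * X j = 0) : a = 0 ∧ b = 0 := by
  classical
  have hcoeff (k : σ) := congrArg (coeff (Finsupp.single k 1)) h
  simp only [coeff_add, coeff_C_mul, coeff_X, coeff_zero,
    Finsupp.single_left_inj one_ne_zero] at hcoeff
  exact ⟨by simpa [hij.symm] using hcoeff i, by simpa [hij] using hcoeff j⟩

end CommSemiring

theorem eq_C_of_aeval_C_mul_X_eq_self [CommRing R] [IsDomain R] {c : R} (hc : ¬IsOfFinOrder c)
    {p : MvPolynomial σ R} (hp : aeval (fun i => C c * X i) p = p) : p = C (coeff 0 p) := by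
  classical
  ext m
  rw [coeff_C]
  split_ifs with hm
  · rw [hm]
  · have hfix := coeff_aeval_C_mul_X c p m
    rw [hp, eq_comm, mul_left_eq_self₀] at hfix
    refine hfix.resolve_left fun h => hc (isOfFinOrder_iff_pow_eq_one.2 ⟨m.degree, ?_, h⟩)
    exact Nat.pos_of_ne_zero ((Finsupp.degree_eq_zero_iff m).not.2 (Ne.symm hm))

end MvPolynomial

/-- The counterexample: R = ℚ[y,z] with σ(y)=2y, σ(z)=2z is not σ-simple;
its σ-constants are ℚ, all Casoratian-type determinants
σ^i(y)σ^j(z) − σ^i(z)σ^j(y) vanish, yet y, z are linearly independent over ℚ. -/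
theorem stmt_4 :
    (∀ r : MvPolynomial (Fin 2) ℚ, sigma4 r = r → ∃ q : ℚ, r = MvPolynomial.C q) ∧
    (∀ i j : ℕ,
      (⇑sigma4)^[i] (MvPolynomial.X 0) * (⇑sigma4)^[j] (MvPolynomial.X 1) -
        (⇑sigma4)^[i] (MvPolynomial.X 1) * (⇑sigma4)^[j] (MvPolynomial.X 0) = 0) ∧
    (∀ a b : ℚ,
      MvPolynomial.C a * MvPolynomial.X 0 + MvPolynomial.C b * MvPolynomial.X 1 = 0 →
      a = 0 ∧ b = 0) := by
  have two_not_isOfFinOrder : ¬IsOfFinOrder (2 : ℚ) :=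
    orderOf_eq_zero_iff.1 (orderOf_abs_ne_one (by norm_num))
  refine ⟨fun r hr => ⟨_, eq_C_of_aeval_C_mul_X_eq_self two_not_isOfFinOrder hr⟩,
    fun i j => ?_, fun a b => eq_zero_and_eq_zero_of_C_mul_X_add_C_mul_X_eq_zero (by decide)⟩
  simp only [sigma4, iterate_aeval_C_mul_X_X]
  ring
end

section
/- Let S ⊆ T be ΣΔ-rings with S ΣΔ-simple, and suppose T is generated as an S-module by its constants T^{ΣΔ}. Then the map J ↦ J·T is a bijection from the set of ideals of the constant ring T^{ΣΔ} onto the set of ΣΔ-ideals of T; in particular every ΣΔ-ideal I of T is generated by I ∩ T^{ΣΔ}. -/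
/-- The subring of ΣΔ-constants of a ΣΔ-ring. -/
def constSubring (T : Type*) [CommRing T]
    (Sa : Set (T ≃+* T)) (Da : Set (Derivation ℤ T T)) : Subring T where
  carrier := {r | (∀ σ ∈ Sa, σ r = r) ∧ ∀ δ ∈ Da, δ r = 0}
  zero_mem' := ⟨fun σ _ => map_zero σ, fun δ _ => map_zero δ⟩
  one_mem' := ⟨fun σ _ => map_one σ, fun δ _ => δ.map_one_eq_zero⟩
  add_mem' := fun {a b} ha hb =>
    ⟨fun σ hσ => by rw [map_add, ha.1 σ hσ, hb.1 σ hσ],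
     fun δ hδ => by rw [map_add, ha.2 δ hδ, hb.2 δ hδ, add_zero]⟩
  neg_mem' := fun {a} ha =>
    ⟨fun σ hσ => by rw [map_neg, ha.1 σ hσ],
     fun δ hδ => by rw [map_neg, ha.2 δ hδ, neg_zero]⟩
  mul_mem' := fun {a b} ha hb =>
    ⟨fun σ hσ => by rw [map_mul, ha.1 σ hσ, hb.1 σ hσ],
     fun δ hδ => by
      rw [Derivation.leibniz, ha.2 δ hδ, hb.2 δ hδ, smul_zero, smul_zero, add_zero]⟩

section Aux

variable {T : Type*} [CommRing T]

theorem mem_constSubring {Sa : Set (T ≃+* T)} {Da : Set (Derivation ℤ T T)} {r : T} :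
    r ∈ constSubring T Sa Da ↔ (∀ σ ∈ Sa, σ r = r) ∧ ∀ δ ∈ Da, δ r = 0 := Iff.rfl

/-- the constants of `S` -/
def KK (Sa : Set (T ≃+* T)) (Da : Set (Derivation ℤ T T)) (S : Subring T) : Set T :=
  {x | x ∈ S ∧ x ∈ constSubring T Sa Da}

/-- linear independence over the constants of `S` -/
def LIK (Sa : Set (T ≃+* T)) (Da : Set (Derivation ℤ T T)) (S : Subring T)
    {n : ℕ} (b : Fin n → T) : Prop :=
  ∀ lam : Fin n → T, (∀ i, lam i ∈ KK Sa Da S) → ∑ i, lam i * b i = 0 → ∀ i, lam i = 0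

/-- membership in the `K`-span -/
def SpK (Sa : Set (T ≃+* T)) (Da : Set (Derivation ℤ T T)) (S : Subring T)
    {n : ℕ} (b : Fin n → T) (x : T) : Prop :=
  ∃ lam : Fin n → T, (∀ i, lam i ∈ KK Sa Da S) ∧ x = ∑ i, lam i * b i

variable {Sa : Set (T ≃+* T)} {Da : Set (Derivation ℤ T T)} {S : Subring T}

theorem KK.zero : (0 : T) ∈ KK Sa Da S := ⟨S.zero_mem, (constSubring T Sa Da).zero_mem⟩
theorem KK.one : (1 : T) ∈ KK Sa Da S := ⟨S.one_mem, (constSubring T Sa Da).one_mem⟩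
theorem KK.add {a b : T} (ha : a ∈ KK Sa Da S) (hb : b ∈ KK Sa Da S) : a + b ∈ KK Sa Da S :=
  ⟨S.add_mem ha.1 hb.1, add_mem ha.2 hb.2⟩
theorem KK.neg {a : T} (ha : a ∈ KK Sa Da S) : -a ∈ KK Sa Da S :=
  ⟨S.neg_mem ha.1, neg_mem ha.2⟩
theorem KK.mul {a b : T} (ha : a ∈ KK Sa Da S) (hb : b ∈ KK Sa Da S) : a * b ∈ KK Sa Da S :=
  ⟨S.mul_mem ha.1 hb.1, mul_mem ha.2 hb.2⟩

/-- nonzero constants of the simple ring `S` are invertible with constant inverse in `S` -/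
theorem kinv
    (hSσ : ∀ σ ∈ Sa, ∀ x ∈ S, σ x ∈ S)
    (hSδ : ∀ δ ∈ Da, ∀ x ∈ S, δ x ∈ S)
    (hsimple : ∀ J : Set T, J ⊆ S → (0:T) ∈ J →
      (∀ a ∈ J, ∀ b ∈ J, a + b ∈ J) → (∀ s ∈ S, ∀ a ∈ J, s * a ∈ J) →
      (∀ σ ∈ Sa, ∀ a ∈ J, σ a ∈ J) → (∀ δ ∈ Da, ∀ a ∈ J, δ a ∈ J) →
      J = {0} ∨ (1:T) ∈ J)
    (a : T) (ha : a ∈ KK Sa Da S) (hne : a ≠ 0) :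
    ∃ b, b ∈ KK Sa Da S ∧ a * b = 1 := by
  obtain ⟨haS, haC⟩ := ha
  set J : Set T := {x | ∃ s ∈ S, x = s * a} with hJ
  have hsub : J ⊆ (S : Set T) := by rintro x ⟨s, hs, rfl⟩; exact S.mul_mem hs haS
  have h0 : (0:T) ∈ J := ⟨0, S.zero_mem, (zero_mul a).symm⟩
  have hadd : ∀ x ∈ J, ∀ y ∈ J, x + y ∈ J := by
    rintro x ⟨s, hs, rfl⟩ y ⟨u, hu, rfl⟩
    exact ⟨s + u, S.add_mem hs hu, (add_mul s u a).symm⟩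
  have hsmul : ∀ r ∈ S, ∀ x ∈ J, r * x ∈ J := by
    rintro r hr x ⟨s, hs, rfl⟩
    exact ⟨r * s, S.mul_mem hr hs, (mul_assoc r s a).symm⟩
  have hsig : ∀ σ ∈ Sa, ∀ x ∈ J, σ x ∈ J := by
    rintro σ hσ x ⟨s, hs, rfl⟩
    exact ⟨σ s, hSσ σ hσ s hs, by rw [map_mul, haC.1 σ hσ]⟩
  have hdel : ∀ δ ∈ Da, ∀ x ∈ J, δ x ∈ J := by
    rintro δ hδ x ⟨s, hs, rfl⟩
    refine ⟨δ s, hSδ δ hδ s hs, ?_⟩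
    rw [Derivation.leibniz, haC.2 δ hδ, smul_zero, zero_add, smul_eq_mul, mul_comm]
  rcases hsimple J hsub h0 hadd hsmul hsig hdel with h | h
  · exfalso
    have : a ∈ J := ⟨1, S.one_mem, (one_mul a).symm⟩
    rw [h] at this
    exact hne this
  · obtain ⟨s, hsS, hs1⟩ := h
    have e : s * a = 1 := hs1.symm
    have hσs : ∀ σ ∈ Sa, σ s = s := by
      intro σ hσ
      have h2 : σ s * a = 1 := by
        rw [← haC.1 σ hσ, ← map_mul, e, map_one]
      calc σ s = σ s * 1 := (mul_one _).symm
        _ = σ s * (s * a) := by rw [e]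
        _ = s * (σ s * a) := by ring
        _ = s := by rw [h2, mul_one]
    have hδs : ∀ δ ∈ Da, δ s = 0 := by
      intro δ hδ
      have h3 : a * δ s = 0 := by
        have := congrArg (δ : T → T) e
        rwa [Derivation.leibniz, haC.2 δ hδ, smul_zero, zero_add, smul_eq_mul, Derivation.map_one_eq_zero] at this
      calc δ s = δ s * 1 := (mul_one _).symm
        _ = δ s * (s * a) := by rw [e]
        _ = s * (a * δ s) := by ring
        _ = 0 := by rw [h3, mul_zero]
    exact ⟨s, ⟨hsS, mem_constSubring.2 ⟨hσs, hδs⟩⟩, by rw [mul_comm]; exact e⟩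

end Aux

section Aux2
variable {T : Type*} [CommRing T]
variable {Sa : Set (T ≃+* T)} {Da : Set (Derivation ℤ T T)} {S : Subring T}

theorem lik_snoc {l : ℕ} {b : Fin l → T} (hb : LIK Sa Da S b) {x : T}
    (hx : ¬ SpK Sa Da S b x)
    (hinv : ∀ a : T, a ∈ KK Sa Da S → a ≠ 0 → ∃ y, y ∈ KK Sa Da S ∧ a * y = 1) :
    LIK Sa Da S (Fin.snoc b x) := by
  intro lam hlam hsum i
  have hsplit : ∑ i : Fin (l+1), lam i * (Fin.snoc b x : Fin (l+1) → T) i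
      = (∑ i : Fin l, lam i.castSucc * b i) + lam (Fin.last l) * x := by
    rw [Fin.sum_univ_castSucc]
    simp [Fin.snoc_castSucc, Fin.snoc_last]
  rw [hsplit] at hsum
  by_cases hl : lam (Fin.last l) = 0
  · have h0 : ∑ i : Fin l, lam i.castSucc * b i = 0 := by
      rw [hl, zero_mul, add_zero] at hsum; exact hsum
    have hall := hb (fun i => lam i.castSucc) (fun i => hlam _) h0
    refine Fin.lastCases ?_ (fun i' => ?_) i
    · exact hl
    · exact hall i'
  · exfalso
    obtain ⟨ν, hνK, hν1⟩ := hinv _ (hlam (Fin.last l)) hl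
    apply hx
    refine ⟨fun i => -(ν * lam i.castSucc), fun i => KK.neg (KK.mul hνK (hlam _)), ?_⟩
    have h0 : lam (Fin.last l) * x = - ∑ i : Fin l, lam i.castSucc * b i :=
      eq_neg_of_add_eq_zero_right hsum
    calc x = ν * (lam (Fin.last l) * x) := by
          rw [← mul_assoc, mul_comm ν, hν1, one_mul]
      _ = ν * -(∑ i : Fin l, lam i.castSucc * b i) := by rw [h0]
      _ = ∑ i : Fin l, -(ν * lam i.castSucc) * b i := by
          rw [mul_neg, Finset.mul_sum, ← Finset.sum_neg_distrib]
          exact Finset.sum_congr rfl fun i _ => by ring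

theorem spk_mono {m : ℕ} {p : Fin (m+1) → T} {x : T}
    (h : SpK Sa Da S (fun i => p i.castSucc) x) : SpK Sa Da S p x := by
  obtain ⟨lam, hlam, hrep⟩ := h
  refine ⟨Fin.snoc lam 0, ?_, ?_⟩
  · exact fun i => Fin.lastCases (by rw [Fin.snoc_last]; exact KK.zero)
      (fun i' => by rw [Fin.snoc_castSucc]; exact hlam i') i
  · rw [Fin.sum_univ_castSucc]
    simp only [Fin.snoc_castSucc, Fin.snoc_last, zero_mul, add_zero]
    exact hrep

theorem spk_last {m : ℕ} (p : Fin (m+1) → T) : SpK Sa Da S p (p (Fin.last m)) := by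
  refine ⟨Fin.snoc 0 1, ?_, ?_⟩
  · exact fun i => Fin.lastCases (by rw [Fin.snoc_last]; exact KK.one)
      (fun i' => by rw [Fin.snoc_castSucc]; exact KK.zero) i
  · rw [Fin.sum_univ_castSucc]
    simp [Fin.snoc_castSucc, Fin.snoc_last]

theorem steinitz
    (hinv : ∀ a : T, a ∈ KK Sa Da S → a ≠ 0 → ∃ y, y ∈ KK Sa Da S ∧ a * y = 1) :
    ∀ (m : ℕ) (p : Fin m → T), ∃ (l : ℕ) (b : Fin l → T),
      (∀ i, SpK Sa Da S p (b i)) ∧ LIK Sa Da S b ∧ ∀ j, SpK Sa Da S b (p j) := by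
  intro m
  induction m with
  | zero =>
      intro p
      exact ⟨0, Fin.elim0, fun i => i.elim0, fun lam _ _ i => i.elim0, fun j => j.elim0⟩
  | succ m ih =>
      intro p
      obtain ⟨l, b, hb1, hb2, hb3⟩ := ih (fun i => p i.castSucc)
      by_cases hx : SpK Sa Da S b (p (Fin.last m))
      · exact ⟨l, b, fun i => spk_mono (hb1 i), hb2,
          fun j => Fin.lastCases hx (fun j' => hb3 j') j⟩
      · refine ⟨l + 1, Fin.snoc b (p (Fin.last m)), ?_, lik_snoc hb2 hx hinv, ?_⟩
        · intro i
          refine Fin.lastCases ?_ (fun i' => ?_) i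
          · rw [Fin.snoc_last]; exact spk_last p
          · rw [Fin.snoc_castSucc]; exact spk_mono (hb1 i')
        · intro j
          refine Fin.lastCases ?_ (fun j' => ?_) j
          · have := spk_last (Sa := Sa) (Da := Da) (S := S) (Fin.snoc b (p (Fin.last m)) : Fin (l+1) → T)
            rwa [Fin.snoc_last] at this
          · obtain ⟨μ, hμ, hrep⟩ := hb3 j'
            refine ⟨Fin.snoc μ 0, ?_, ?_⟩
            · exact fun i => Fin.lastCases (by rw [Fin.snoc_last]; exact KK.zero)
                (fun i' => by rw [Fin.snoc_castSucc]; exact hμ i') i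
            · rw [Fin.sum_univ_castSucc]
              simp only [Fin.snoc_castSucc, Fin.snoc_last, zero_mul, add_zero]
              exact hrep

end Aux2
section Aux3
variable {T : Type*} [CommRing T]
variable {Sa : Set (T ≃+* T)} {Da : Set (Derivation ℤ T T)} {S : Subring T}

theorem indep_strong
    (hSσ : ∀ σ ∈ Sa, ∀ x ∈ S, σ x ∈ S)
    (hSδ : ∀ δ ∈ Da, ∀ x ∈ S, δ x ∈ S)
    (hsimple : ∀ J : Set T, J ⊆ S → (0:T) ∈ J →
      (∀ a ∈ J, ∀ b ∈ J, a + b ∈ J) → (∀ s ∈ S, ∀ a ∈ J, s * a ∈ J) →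
      (∀ σ ∈ Sa, ∀ a ∈ J, σ a ∈ J) → (∀ δ ∈ Da, ∀ a ∈ J, δ a ∈ J) →
      J = {0} ∨ (1:T) ∈ J) :
    ∀ (n : ℕ) (c : Fin n → T), (∀ i, c i ∈ constSubring T Sa Da) → LIK Sa Da S c →
      ∀ s : Fin n → T, (∀ i, s i ∈ S) → ∑ i, s i * c i = 0 → ∀ i, s i = 0 := by
  intro n
  induction n with
  | zero => intro c _ _ s _ _ i; exact i.elim0
  | succ m ih =>
      intro c hc hlik s hs hsum j
      by_contra hne
      set A : Set T :=
        {x | ∃ u : Fin (m+1) → T, (∀ i, u i ∈ S) ∧ u j = x ∧ ∑ i, u i * c i = 0} with hA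
      have hmemA : s j ∈ A := ⟨s, hs, rfl, hsum⟩
      have hsub : A ⊆ (S : Set T) := by rintro x ⟨u, huS, rfl, _⟩; exact huS j
      have h0 : (0:T) ∈ A :=
        ⟨0, fun i => S.zero_mem, rfl, by simp⟩
      have hadd : ∀ x ∈ A, ∀ y ∈ A, x + y ∈ A := by
        rintro x ⟨u, huS, rfl, hu0⟩ y ⟨w, hwS, rfl, hw0⟩
        refine ⟨u + w, fun i => S.add_mem (huS i) (hwS i), rfl, ?_⟩
        show ∑ i, (u i + w i) * c i = 0
        have : ∑ i, (u i + w i) * c i = (∑ i, u i * c i) + ∑ i, w i * c i := by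
          rw [← Finset.sum_add_distrib]
          exact Finset.sum_congr rfl fun i _ => by ring
        rw [this, hu0, hw0, add_zero]
      have hsmul : ∀ r ∈ S, ∀ x ∈ A, r * x ∈ A := by
        rintro r hr x ⟨u, huS, rfl, hu0⟩
        refine ⟨fun i => r * u i, fun i => S.mul_mem hr (huS i), rfl, ?_⟩
        have : ∑ i, r * u i * c i = r * ∑ i, u i * c i := by
          rw [Finset.mul_sum]
          exact Finset.sum_congr rfl fun i _ => by ring
        rw [this, hu0, mul_zero]
      have hsig : ∀ σ ∈ Sa, ∀ x ∈ A, σ x ∈ A := by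
        rintro σ hσ x ⟨u, huS, rfl, hu0⟩
        refine ⟨fun i => σ (u i), fun i => hSσ σ hσ _ (huS i), rfl, ?_⟩
        have : ∑ i, σ (u i) * c i = σ (∑ i, u i * c i) := by
          rw [map_sum]
          exact Finset.sum_congr rfl fun i _ => by rw [map_mul, (hc i).1 σ hσ]
        rw [this, hu0, map_zero]
      have hdel : ∀ δ ∈ Da, ∀ x ∈ A, δ x ∈ A := by
        rintro δ hδ x ⟨u, huS, rfl, hu0⟩
        refine ⟨fun i => δ (u i), fun i => hSδ δ hδ _ (huS i), rfl, ?_⟩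
        have : ∑ i, δ (u i) * c i = δ (∑ i, u i * c i) := by
          rw [map_sum]
          refine Finset.sum_congr rfl fun i _ => ?_
          rw [Derivation.leibniz, (hc i).2 δ hδ, smul_zero, zero_add, smul_eq_mul, mul_comm]
        rw [this, hu0, map_zero]
      rcases hsimple A hsub h0 hadd hsmul hsig hdel with h | h
      · rw [h] at hmemA; exact hne hmemA
      · obtain ⟨v, hvS, hvj, hv0⟩ := h
        have hlik' : LIK Sa Da S (fun i => c (j.succAbove i)) := by
          intro lam hlam hl0 i
          have hcoeff : ∀ i', (j.insertNth 0 lam : Fin (m+1) → T) i' ∈ KK Sa Da S := by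
            intro i'
            rcases eq_or_ne i' j with rfl | hne'
            · rw [Fin.insertNth_apply_same]; exact KK.zero
            · obtain ⟨i'', rfl⟩ := Fin.exists_succAbove_eq hne'
              rw [Fin.insertNth_apply_succAbove]; exact hlam i''
          have hsum' : ∑ i', (j.insertNth 0 lam : Fin (m+1) → T) i' * c i' = 0 := by
            rw [Fin.sum_univ_succAbove (fun i' => (j.insertNth 0 lam : Fin (m+1) → T) i' * c i') j]
            simp only [Fin.insertNth_apply_same, Fin.insertNth_apply_succAbove, zero_mul, zero_add]
            exact hl0
          have := hlik _ hcoeff hsum' (j.succAbove i)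
          rwa [Fin.insertNth_apply_succAbove] at this
        have key : ∀ (w : Fin (m+1) → T), (∀ i, w i ∈ S) → w j = 0 →
            (∑ i, w i * c i = 0) → ∀ i, w i = 0 := by
          intro w hwS hwj hw0 i
          have e : ∑ i' : Fin m, w (j.succAbove i') * c (j.succAbove i') = 0 := by
            have := Fin.sum_univ_succAbove (fun i' => w i' * c i') j
            rw [hw0, hwj, zero_mul, zero_add] at this
            exact this.symm
          have hres := ih (fun i' => c (j.succAbove i')) (fun i' => hc _) hlik'
            (fun i' => w (j.succAbove i')) (fun i' => hwS _) e
          rcases eq_or_ne i j with rfl | hne'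
          · exact hwj
          · obtain ⟨i'', rfl⟩ := Fin.exists_succAbove_eq hne'
            exact hres i''
        have hvK : ∀ i, v i ∈ KK Sa Da S := by
          have hδ0 : ∀ δ ∈ Da, ∀ i, δ (v i) = 0 := by
            intro δ hδ
            have hw0 : ∑ i, δ (v i) * c i = 0 := by
              have e : ∑ i, δ (v i) * c i = δ (∑ i, v i * c i) := by
                rw [map_sum]
                refine Finset.sum_congr rfl fun i _ => ?_
                rw [Derivation.leibniz, (hc i).2 δ hδ, smul_zero, zero_add, smul_eq_mul, mul_comm]
              rw [e, hv0, map_zero]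
            exact key (fun i => δ (v i)) (fun i => hSδ δ hδ _ (hvS i))
              (show δ (v j) = 0 by rw [hvj]; exact δ.map_one_eq_zero) hw0
          have hσid : ∀ σ ∈ Sa, ∀ i, σ (v i) = v i := by
            intro σ hσ i
            have hw0 : ∑ i, (σ (v i) - v i) * c i = 0 := by
              have e : ∑ i, (σ (v i) - v i) * c i
                  = σ (∑ i, v i * c i) - ∑ i, v i * c i := by
                rw [map_sum, ← Finset.sum_sub_distrib]
                refine Finset.sum_congr rfl fun i _ => ?_
                rw [map_mul, (hc i).1 σ hσ]; ring
              rw [e, hv0, map_zero, sub_zero]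
            have := key (fun i => σ (v i) - v i)
              (fun i => S.sub_mem (hSσ σ hσ _ (hvS i)) (hvS i))
              (show σ (v j) - v j = 0 by rw [hvj, map_one, sub_self]) hw0 i
            exact sub_eq_zero.mp this
          intro i
          exact ⟨hvS i, mem_constSubring.2
            ⟨fun σ hσ => hσid σ hσ i, fun δ hδ => hδ0 δ hδ i⟩⟩
        have := hlik v hvK hv0 j
        rw [hvj] at this
        exact hne (by rw [← mul_one (s j), this, mul_zero])

end Aux3
section Aux4
variable {T : Type*} [CommRing T]
variable {Sa : Set (T ≃+* T)} {Da : Set (Derivation ℤ T T)} {S : Subring T}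

theorem decomp
    (hgen : ∀ t : T, ∃ (k : ℕ) (s : Fin k → T) (c : Fin k → T),
      (∀ i, s i ∈ S) ∧ (∀ i, c i ∈ constSubring T Sa Da) ∧ t = ∑ i, s i * c i)
    (Q : Set T) (hQ : ∀ c ∈ constSubring T Sa Da, ∀ q ∈ Q, c * q ∈ Q) :
    ∀ x ∈ Ideal.span Q, ∃ (n : ℕ) (r a : Fin n → T),
      (∀ i, r i ∈ S) ∧ (∀ i, a i ∈ Q) ∧ x = ∑ i, r i * a i := by
  have hmul : ∀ c ∈ constSubring T Sa Da, ∀ y ∈ Submodule.span (↥S) Q,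
      c * y ∈ Submodule.span (↥S) Q := by
    intro c hc y hy
    refine Submodule.span_induction ?_ ?_ ?_ ?_ hy
    · exact fun q hq => Submodule.subset_span (hQ c hc q hq)
    · rw [mul_zero]; exact Submodule.zero_mem _
    · intro a b _ _ ha hb; rw [mul_add]; exact Submodule.add_mem _ ha hb
    · intro a y _ hcy
      have e : c * (a • y) = a • (c * y) := by
        show c * (↑a * y) = ↑a * (c * y); ring
      rw [e]; exact Submodule.smul_mem _ _ hcy
  have hspan : ∀ x ∈ Ideal.span Q, x ∈ Submodule.span (↥S) Q := by
    intro x hx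
    refine Submodule.span_induction ?_ ?_ ?_ ?_ hx
    · exact fun q hq => Submodule.subset_span hq
    · exact Submodule.zero_mem _
    · exact fun a b _ _ ha hb => Submodule.add_mem _ ha hb
    · intro t x _ hxs
      obtain ⟨k, s, cc, hsS, hcC, ht⟩ := hgen t
      have e : t • x = ∑ i, (⟨s i, hsS i⟩ : ↥S) • (cc i * x) := by
        show t * x = _
        rw [ht, Finset.sum_mul]
        exact Finset.sum_congr rfl fun i _ => by
          show s i * cc i * x = s i * (cc i * x); ring
      rw [e]
      exact Submodule.sum_mem _ fun i _ => Submodule.smul_mem _ _ (hmul (cc i) (hcC i) x hxs)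
  intro x hx
  have := hspan x hx
  rw [Submodule.mem_span_set'] at this
  obtain ⟨n, f, g, hfg⟩ := this
  refine ⟨n, fun i => ↑(f i), fun i => ↑(g i), fun i => (f i).2, fun i => (g i).2, ?_⟩
  rw [← hfg]
  exact Finset.sum_congr rfl fun i _ => rfl

theorem rebase {m l : ℕ} (r p : Fin m → T) (b : Fin l → T) (hr : ∀ i, r i ∈ S)
    (hp : ∀ j, SpK Sa Da S b (p j)) :
    ∃ w : Fin l → T, (∀ i, w i ∈ S) ∧ ∑ j, r j * p j = ∑ i, w i * b i := by
  choose μ hμK hμrep using hp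
  refine ⟨fun i => ∑ j, r j * μ j i,
    fun i => S.sum_mem fun j _ => S.mul_mem (hr j) ((hμK j i).1), ?_⟩
  calc ∑ j, r j * p j = ∑ j, ∑ i, r j * (μ j i * b i) := by
        refine Finset.sum_congr rfl fun j _ => ?_
        rw [hμrep j, Finset.mul_sum]
    _ = ∑ i, ∑ j, r j * (μ j i * b i) := Finset.sum_comm
    _ = ∑ i, (∑ j, r j * μ j i) * b i := by
        refine Finset.sum_congr rfl fun i _ => ?_
        rw [Finset.sum_mul]
        exact Finset.sum_congr rfl fun j _ => by ring

end Aux4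
section Aux5
variable {T : Type*} [CommRing T]
variable {Sa : Set (T ≃+* T)} {Da : Set (Derivation ℤ T T)} {S : Subring T}

theorem lemM
    (hSσ : ∀ σ ∈ Sa, ∀ x ∈ S, σ x ∈ S)
    (hSδ : ∀ δ ∈ Da, ∀ x ∈ S, δ x ∈ S)
    (hsimple : ∀ J : Set T, J ⊆ S → (0:T) ∈ J →
      (∀ a ∈ J, ∀ b ∈ J, a + b ∈ J) → (∀ s ∈ S, ∀ a ∈ J, s * a ∈ J) →
      (∀ σ ∈ Sa, ∀ a ∈ J, σ a ∈ J) → (∀ δ ∈ Da, ∀ a ∈ J, δ a ∈ J) →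
      J = {0} ∨ (1:T) ∈ J)
    (hgen : ∀ t : T, ∃ (k : ℕ) (s : Fin k → T) (c : Fin k → T),
      (∀ i, s i ∈ S) ∧ (∀ i, c i ∈ constSubring T Sa Da) ∧ t = ∑ i, s i * c i)
    (I : Ideal T) {n : ℕ} (c : Fin n → T)
    (hc : ∀ i, c i ∈ constSubring T Sa Da)
    (hIM : ∀ lam : Fin n → T, (∀ i, lam i ∈ KK Sa Da S) → (∑ i, lam i * c i) ∈ I →
      (∑ i, lam i * c i) ∈ constSubring T Sa Da → ∀ i, lam i = 0)
    (w : Fin n → T) (hw : ∀ i, w i ∈ S)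
    (hmem : (∑ i, w i * c i) ∈ Ideal.span ((I : Set T) ∩ (constSubring T Sa Da : Set T))) :
    ∀ i, w i = 0 := by
  intro i0
  have hinv := kinv hSσ hSδ hsimple
  set Q : Set T := (I : Set T) ∩ (constSubring T Sa Da : Set T) with hQdef
  have hQ : ∀ c' ∈ constSubring T Sa Da, ∀ q ∈ Q, c' * q ∈ Q := by
    rintro c' hc' q ⟨hqI, hqC⟩
    exact ⟨I.mul_mem_left c' hqI, mul_mem hc' hqC⟩
  obtain ⟨m, r, p, hrS, hpQ, hrep⟩ := decomp hgen Q hQ _ hmem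
  obtain ⟨l, b, hb1, hb2, hb3⟩ := steinitz hinv m p
  obtain ⟨w', hw'S, hw'rep⟩ := rebase r p b hrS hb3
  have hbI : ∀ i, b i ∈ I := by
    intro i
    obtain ⟨lam, hlam, hr'⟩ := hb1 i
    rw [hr']
    exact Ideal.sum_mem _ fun j _ => I.mul_mem_left _ (hpQ j).1
  have hbC : ∀ i, b i ∈ constSubring T Sa Da := by
    intro i
    obtain ⟨lam, hlam, hr'⟩ := hb1 i
    rw [hr']
    exact sum_mem fun j _ => mul_mem (hlam j).2 (hpQ j).2
  set cc : Fin (n + l) → T := Fin.append c b with hccdef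
  set ss : Fin (n + l) → T := Fin.append w (fun i => -(w' i)) with hssdef
  have hsum0 : ∑ i, ss i * cc i = 0 := by
    rw [Fin.sum_univ_add (fun i => ss i * cc i)]
    simp only [hssdef, hccdef, Fin.append_left, Fin.append_right]
    have e : ∑ i : Fin l, -(w' i) * b i = -∑ i : Fin l, w' i * b i := by
      rw [← Finset.sum_neg_distrib]
      exact Finset.sum_congr rfl fun i _ => by ring
    rw [e, hrep, hw'rep, add_neg_cancel]
  have hindep : LIK Sa Da S cc := by
    intro lam hlam h0 i
    rw [Fin.sum_univ_add (fun i => lam i * cc i)] at h0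
    simp only [hccdef, Fin.append_left, Fin.append_right] at h0
    have hscI : (∑ i : Fin n, lam (Fin.castAdd l i) * c i) ∈ I := by
      have e := eq_neg_of_add_eq_zero_left h0
      rw [e]
      exact I.neg_mem (Ideal.sum_mem _ fun j _ => I.mul_mem_left _ (hbI j))
    have hscC : (∑ i : Fin n, lam (Fin.castAdd l i) * c i) ∈ constSubring T Sa Da := by
      have e := eq_neg_of_add_eq_zero_left h0
      rw [e]
      exact neg_mem (sum_mem fun j _ => mul_mem (hlam _).2 (hbC j))
    have hc0 : ∀ i1 : Fin n, lam (Fin.castAdd l i1) = 0 :=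
      hIM (fun i1 => lam (Fin.castAdd l i1)) (fun i1 => hlam _) hscI hscC
    have hfirst : ∑ i : Fin n, lam (Fin.castAdd l i) * c i = 0 :=
      Finset.sum_eq_zero fun i1 _ => by rw [hc0 i1, zero_mul]
    rw [hfirst, zero_add] at h0
    have hb0 := hb2 (fun i1 => lam (Fin.natAdd n i1)) (fun i1 => hlam _) h0
    exact Fin.addCases hc0 hb0 i
  have hccC : ∀ i, cc i ∈ constSubring T Sa Da := by
    intro i
    refine Fin.addCases (fun i1 => ?_) (fun i1 => ?_) i
    · show cc (Fin.castAdd l i1) ∈ _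
      rw [hccdef]; rw [Fin.append_left]; exact hc i1
    · show cc (Fin.natAdd n i1) ∈ _
      rw [hccdef]; rw [Fin.append_right]; exact hbC i1
  have hssS : ∀ i, ss i ∈ S := by
    intro i
    refine Fin.addCases (fun i1 => ?_) (fun i1 => ?_) i
    · show ss (Fin.castAdd l i1) ∈ _
      rw [hssdef]; rw [Fin.append_left]; exact hw i1
    · show ss (Fin.natAdd n i1) ∈ _
      rw [hssdef]; rw [Fin.append_right]; exact S.neg_mem (hw'S i1)
  have hall := indep_strong hSσ hSδ hsimple (n + l) cc hccC hindep ss hssS hsum0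
  have := hall (Fin.castAdd l i0)
  rw [hssdef] at this
  rwa [Fin.append_left] at this

end Aux5
section Aux6
variable {T : Type*} [CommRing T]
variable {Sa : Set (T ≃+* T)} {Da : Set (Derivation ℤ T T)} {S : Subring T}

theorem main_aux
    (hSσ : ∀ σ ∈ Sa, ∀ x ∈ S, σ x ∈ S)
    (hSδ : ∀ δ ∈ Da, ∀ x ∈ S, δ x ∈ S)
    (hsimple : ∀ J : Set T, J ⊆ S → (0:T) ∈ J →
      (∀ a ∈ J, ∀ b ∈ J, a + b ∈ J) → (∀ s ∈ S, ∀ a ∈ J, s * a ∈ J) →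
      (∀ σ ∈ Sa, ∀ a ∈ J, σ a ∈ J) → (∀ δ ∈ Da, ∀ a ∈ J, δ a ∈ J) →
      J = {0} ∨ (1:T) ∈ J)
    (hgen : ∀ t : T, ∃ (k : ℕ) (s : Fin k → T) (c : Fin k → T),
      (∀ i, s i ∈ S) ∧ (∀ i, c i ∈ constSubring T Sa Da) ∧ t = ∑ i, s i * c i)
    (I : Ideal T)
    (hIσ : ∀ σ ∈ Sa, ∀ x ∈ I, σ x ∈ I) (hIδ : ∀ δ ∈ Da, ∀ x ∈ I, δ x ∈ I) :
    ∀ (n : ℕ) (s c : Fin n → T), (∀ i, s i ∈ S) →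
      (∀ i, c i ∈ constSubring T Sa Da) → (∑ i, s i * c i) ∈ I →
      (∑ i, s i * c i) ∈ Ideal.span ((I : Set T) ∩ (constSubring T Sa Da : Set T)) := by
  intro n
  induction n with
  | zero =>
      intro s c _ _ _
      have : ∑ i : Fin 0, s i * c i = 0 := by simp
      rw [this]; exact Ideal.zero_mem _
  | succ m ih =>
      intro s c hsS hcC htI
      by_cases hdep : ∃ (j : Fin (m+1)) (lam : Fin (m+1) → T),
          (∀ i, lam i ∈ KK Sa Da S) ∧ lam j = 1 ∧ (∑ i, lam i * c i) ∈ I ∧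
          (∑ i, lam i * c i) ∈ constSubring T Sa Da
      · obtain ⟨j, lam, hlamK, hlamj, haI, haC⟩ := hdep
        have key : (∑ i : Fin m, (s (j.succAbove i) - s j * lam (j.succAbove i)) * c (j.succAbove i))
            = (∑ i, s i * c i) - s j * ∑ i, lam i * c i := by
          have e2 : ∑ i : Fin (m+1), (s i - s j * lam i) * c i
              = (∑ i, s i * c i) - s j * ∑ i, lam i * c i := by
            rw [Finset.mul_sum, ← Finset.sum_sub_distrib]
            exact Finset.sum_congr rfl fun i _ => by ring
          rw [← e2, Fin.sum_univ_succAbove (fun i => (s i - s j * lam i) * c i) j, hlamj]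
          simp
        have hstep : ((∑ i, s i * c i) - s j * ∑ i, lam i * c i) ∈ I :=
          I.sub_mem htI (I.mul_mem_left _ haI)
        have hih := ih (fun i => s (j.succAbove i) - s j * lam (j.succAbove i))
          (fun i => c (j.succAbove i))
          (fun i => S.sub_mem (hsS _) (S.mul_mem (hsS j) ((hlamK _).1)))
          (fun i => hcC _) (by rw [key]; exact hstep)
        rw [key] at hih
        have haB : (∑ i, lam i * c i) ∈
            Ideal.span ((I : Set T) ∩ (constSubring T Sa Da : Set T)) :=
          Ideal.subset_span ⟨haI, haC⟩
        have e3 : (∑ i, s i * c i)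
            = ((∑ i, s i * c i) - s j * ∑ i, lam i * c i) + s j * ∑ i, lam i * c i := by ring
        rw [e3]
        exact Ideal.add_mem _ hih (Ideal.mul_mem_left _ _ haB)
      · push_neg at hdep
        have hIM : ∀ lam : Fin (m+1) → T, (∀ i, lam i ∈ KK Sa Da S) →
            (∑ i, lam i * c i) ∈ I → (∑ i, lam i * c i) ∈ constSubring T Sa Da →
            ∀ j, lam j = 0 := by
          intro lam hlamK hmemI hmemC j
          by_contra hne
          obtain ⟨ν, hνK, hν1⟩ := kinv hSσ hSδ hsimple (lam j) (hlamK j) hne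
          have e : ∑ i, (ν * lam i) * c i = ν * ∑ i, lam i * c i := by
            rw [Finset.mul_sum]
            exact Finset.sum_congr rfl fun i _ => by ring
          refine hdep j (fun i => ν * lam i) (fun i => KK.mul hνK (hlamK i)) ?_ ?_ ?_
          · show ν * lam j = 1; rw [mul_comm]; exact hν1
          · show (∑ i, (ν * lam i) * c i) ∈ I
            rw [e]; exact I.mul_mem_left _ hmemI
          · show (∑ i, (ν * lam i) * c i) ∈ constSubring T Sa Da
            rw [e]; exact mul_mem hνK.2 hmemC
        by_cases hs0 : ∀ i, s i = 0
        · have : ∑ i, s i * c i = 0 := Finset.sum_eq_zero fun i _ => by rw [hs0 i, zero_mul]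
          rw [this]; exact Ideal.zero_mem _
        · push_neg at hs0
          obtain ⟨j, hj⟩ := hs0
          set A : Set T :=
            {x | ∃ u : Fin (m+1) → T, (∀ i, u i ∈ S) ∧ u j = x ∧ (∑ i, u i * c i) ∈ I} with hA
          have hmemA : s j ∈ A := ⟨s, hsS, rfl, htI⟩
          have hsub : A ⊆ (S : Set T) := by rintro x ⟨u, huS, rfl, _⟩; exact huS j
          have h0 : (0:T) ∈ A := ⟨0, fun i => S.zero_mem, rfl, by simp⟩
          have hadd : ∀ x ∈ A, ∀ y ∈ A, x + y ∈ A := by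
            rintro x ⟨u, huS, rfl, hu0⟩ y ⟨w, hwS, rfl, hw0⟩
            refine ⟨u + w, fun i => S.add_mem (huS i) (hwS i), rfl, ?_⟩
            show (∑ i, (u i + w i) * c i) ∈ I
            have : ∑ i, (u i + w i) * c i = (∑ i, u i * c i) + ∑ i, w i * c i := by
              rw [← Finset.sum_add_distrib]
              exact Finset.sum_congr rfl fun i _ => by ring
            rw [this]; exact I.add_mem hu0 hw0
          have hsmul : ∀ r ∈ S, ∀ x ∈ A, r * x ∈ A := by
            rintro r hr x ⟨u, huS, rfl, hu0⟩
            refine ⟨fun i => r * u i, fun i => S.mul_mem hr (huS i), rfl, ?_⟩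
            show (∑ i, (r * u i) * c i) ∈ I
            have : ∑ i, (r * u i) * c i = r * ∑ i, u i * c i := by
              rw [Finset.mul_sum]
              exact Finset.sum_congr rfl fun i _ => by ring
            rw [this]; exact I.mul_mem_left _ hu0
          have hsig : ∀ σ ∈ Sa, ∀ x ∈ A, σ x ∈ A := by
            rintro σ hσ x ⟨u, huS, rfl, hu0⟩
            refine ⟨fun i => σ (u i), fun i => hSσ σ hσ _ (huS i), rfl, ?_⟩
            show (∑ i, σ (u i) * c i) ∈ I
            have : ∑ i, σ (u i) * c i = σ (∑ i, u i * c i) := by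
              rw [map_sum]
              exact Finset.sum_congr rfl fun i _ => by rw [map_mul, (hcC i).1 σ hσ]
            rw [this]; exact hIσ σ hσ _ hu0
          have hdel : ∀ δ ∈ Da, ∀ x ∈ A, δ x ∈ A := by
            rintro δ hδ x ⟨u, huS, rfl, hu0⟩
            refine ⟨fun i => δ (u i), fun i => hSδ δ hδ _ (huS i), rfl, ?_⟩
            show (∑ i, δ (u i) * c i) ∈ I
            have : ∑ i, δ (u i) * c i = δ (∑ i, u i * c i) := by
              rw [map_sum]
              refine Finset.sum_congr rfl fun i _ => ?_
              rw [Derivation.leibniz, (hcC i).2 δ hδ, smul_zero, zero_add, smul_eq_mul, mul_comm]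
            rw [this]; exact hIδ δ hδ _ hu0
          rcases hsimple A hsub h0 hadd hsmul hsig hdel with h | h
          · exfalso; rw [h] at hmemA; exact hj hmemA
          · obtain ⟨v, hvS, hvj, hvI⟩ := h
            have hred : ∀ w : Fin (m+1) → T, (∀ i, w i ∈ S) → w j = 0 →
                (∑ i, w i * c i) ∈ I →
                (∑ i, w i * c i) ∈ Ideal.span ((I : Set T) ∩ (constSubring T Sa Da : Set T)) := by
              intro w hwS hwj hwI
              have e : ∑ i, w i * c i
                  = ∑ i : Fin m, w (j.succAbove i) * c (j.succAbove i) := by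
                rw [Fin.sum_univ_succAbove (fun i => w i * c i) j, hwj, zero_mul, zero_add]
              rw [e]
              exact ih _ _ (fun i => hwS _) (fun i => hcC _) (by rw [← e]; exact hwI)
            have hδv : ∀ δ ∈ Da, ∀ i, δ (v i) = 0 := by
              intro δ hδ
              have e : ∑ i, δ (v i) * c i = δ (∑ i, v i * c i) := by
                rw [map_sum]
                refine Finset.sum_congr rfl fun i _ => ?_
                rw [Derivation.leibniz, (hcC i).2 δ hδ, smul_zero, zero_add, smul_eq_mul, mul_comm]
              have hwI : (∑ i, δ (v i) * c i) ∈ I := by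
                rw [e]; exact hIδ δ hδ _ hvI
              have hB' := hred (fun i => δ (v i)) (fun i => hSδ δ hδ _ (hvS i))
                (show δ (v j) = 0 by rw [hvj]; exact δ.map_one_eq_zero) hwI
              exact lemM hSσ hSδ hsimple hgen I c hcC hIM (fun i => δ (v i))
                (fun i => hSδ δ hδ _ (hvS i)) hB'
            have hσv : ∀ σ ∈ Sa, ∀ i, σ (v i) = v i := by
              intro σ hσ i
              have e : ∑ i, (σ (v i) - v i) * c i
                  = σ (∑ i, v i * c i) - ∑ i, v i * c i := by
                rw [map_sum, ← Finset.sum_sub_distrib]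
                refine Finset.sum_congr rfl fun i _ => ?_
                rw [map_mul, (hcC i).1 σ hσ]; ring
              have hwI : (∑ i, (σ (v i) - v i) * c i) ∈ I := by
                rw [e]; exact I.sub_mem (hIσ σ hσ _ hvI) hvI
              have hB' := hred (fun i => σ (v i) - v i)
                (fun i => S.sub_mem (hSσ σ hσ _ (hvS i)) (hvS i))
                (show σ (v j) - v j = 0 by rw [hvj, map_one, sub_self]) hwI
              have := lemM hSσ hSδ hsimple hgen I c hcC hIM (fun i => σ (v i) - v i)
                (fun i => S.sub_mem (hSσ σ hσ _ (hvS i)) (hvS i)) hB' i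
              exact sub_eq_zero.mp this
            have ht'C : (∑ i, v i * c i) ∈ constSubring T Sa Da := by
              refine sum_mem fun i _ => mul_mem ?_ (hcC i)
              exact mem_constSubring.2 ⟨fun σ hσ => hσv σ hσ i, fun δ hδ => hδv δ hδ i⟩
            have ht'B : (∑ i, v i * c i) ∈
                Ideal.span ((I : Set T) ∩ (constSubring T Sa Da : Set T)) :=
              Ideal.subset_span ⟨hvI, ht'C⟩
            have e2 : ∑ i, (s i - s j * v i) * c i
                = (∑ i, s i * c i) - s j * ∑ i, v i * c i := by
              rw [Finset.mul_sum, ← Finset.sum_sub_distrib]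
              exact Finset.sum_congr rfl fun i _ => by ring
            have hfin := hred (fun i => s i - s j * v i)
              (fun i => S.sub_mem (hsS i) (S.mul_mem (hsS j) (hvS i)))
              (show s j - s j * v j = 0 by rw [hvj, mul_one, sub_self])
              (by rw [e2]; exact I.sub_mem htI (I.mul_mem_left _ hvI))
            rw [e2] at hfin
            have e3 : (∑ i, s i * c i)
                = ((∑ i, s i * c i) - s j * ∑ i, v i * c i) + s j * ∑ i, v i * c i := by ring
            rw [e3]
            exact Ideal.add_mem _ hfin (Ideal.mul_mem_left _ _ ht'B)

end Aux6

/-- If S ⊆ T are ΣΔ-rings, S is ΣΔ-simple, and T is generated as an S-module by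
its constants T^{ΣΔ}, then J ↦ J·T is a bijection between ideals of T^{ΣΔ} and
ΣΔ-ideals of T; in particular every ΣΔ-ideal I of T is generated by I ∩ T^{ΣΔ}. -/
theorem stmt_6 (T : Type*) [CommRing T]
    (Sa : Set (T ≃+* T)) (Da : Set (Derivation ℤ T T))
    (hcommσσ : ∀ σ₁ ∈ Sa, ∀ σ₂ ∈ Sa, ∀ r : T, σ₁ (σ₂ r) = σ₂ (σ₁ r))
    (hcommδδ : ∀ δ₁ ∈ Da, ∀ δ₂ ∈ Da, ∀ r : T, δ₁ (δ₂ r) = δ₂ (δ₁ r))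
    (hcommσδ : ∀ σ ∈ Sa, ∀ δ ∈ Da, ∀ r : T, σ (δ r) = δ (σ r))
    (S : Subring T)
    (hSσ : ∀ σ ∈ Sa, ∀ x ∈ S, σ x ∈ S)
    (hSσ' : ∀ σ ∈ Sa, ∀ x ∈ S, σ.symm x ∈ S)
    (hSδ : ∀ δ ∈ Da, ∀ x ∈ S, δ x ∈ S)
    (hsimple : ∀ J : Set T, J ⊆ S → (0:T) ∈ J →
      (∀ a ∈ J, ∀ b ∈ J, a + b ∈ J) → (∀ s ∈ S, ∀ a ∈ J, s * a ∈ J) →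
      (∀ σ ∈ Sa, ∀ a ∈ J, σ a ∈ J) → (∀ δ ∈ Da, ∀ a ∈ J, δ a ∈ J) →
      J = {0} ∨ (1:T) ∈ J)
    (hgen : ∀ t : T, ∃ (k : ℕ) (s : Fin k → T) (c : Fin k → T),
      (∀ i, s i ∈ S) ∧ (∀ i, c i ∈ constSubring T Sa Da) ∧ t = ∑ i, s i * c i) :
    (∀ J : Ideal (constSubring T Sa Da),
      (∀ σ ∈ Sa, ∀ x ∈ J.map (constSubring T Sa Da).subtype, σ x ∈ J.map (constSubring T Sa Da).subtype) ∧
      (∀ δ ∈ Da, ∀ x ∈ J.map (constSubring T Sa Da).subtype, δ x ∈ J.map (constSubring T Sa Da).subtype)) ∧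
    Function.Injective
      (fun J : Ideal (constSubring T Sa Da) => J.map (constSubring T Sa Da).subtype) ∧
    (∀ I : Ideal T,
      (∀ σ ∈ Sa, ∀ x ∈ I, σ x ∈ I) → (∀ δ ∈ Da, ∀ x ∈ I, δ x ∈ I) →
      (∃ J : Ideal (constSubring T Sa Da), I = J.map (constSubring T Sa Da).subtype) ∧
      Ideal.span ((I : Set T) ∩ (constSubring T Sa Da : Set T)) = I) := by
  set C := constSubring T Sa Da with hC
  have hmapspan : ∀ J : Ideal ↥C, J.map C.subtype = Ideal.span ((C.subtype) '' ↑J) :=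
    fun J => rfl
  have hinv := kinv (S := S) hSσ hSδ hsimple
  refine ⟨?_, ?_, ?_⟩
  · -- stability of map J
    intro J
    constructor
    · intro σ hσ x hx
      rw [hmapspan] at hx ⊢
      refine Submodule.span_induction ?_ ?_ ?_ ?_ hx
      · rintro q ⟨y, hy, rfl⟩
        have : σ (C.subtype y) = C.subtype y := y.2.1 σ hσ
        rw [this]
        exact Ideal.subset_span ⟨y, hy, rfl⟩
      · rw [map_zero]; exact Ideal.zero_mem _
      · intro a b _ _ ha hb; rw [map_add]; exact Ideal.add_mem _ ha hb
      · intro a x _ hax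
        rw [smul_eq_mul, map_mul]
        exact Ideal.mul_mem_left _ _ hax
    · intro δ hδ x hx
      rw [hmapspan] at hx ⊢
      refine Submodule.span_induction ?_ ?_ ?_ ?_ hx
      · rintro q ⟨y, hy, rfl⟩
        have : δ (C.subtype y) = 0 := y.2.2 δ hδ
        rw [this]
        exact Ideal.zero_mem _
      · rw [map_zero]; exact Ideal.zero_mem _
      · intro a b _ _ ha hb; rw [map_add]; exact Ideal.add_mem _ ha hb
      · intro a x hxmem hax
        rw [smul_eq_mul, Derivation.leibniz, smul_eq_mul, smul_eq_mul]
        refine Ideal.add_mem _ (Ideal.mul_mem_left _ _ hax) ?_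
        exact Ideal.mul_mem_right _ _ hxmem
  · -- injectivity
    have cm : ∀ J : Ideal ↥C, Ideal.comap (C.subtype) (J.map C.subtype) = J := by
      intro J
      refine le_antisymm ?_ Ideal.le_comap_map
      intro x hx
      rw [Ideal.mem_comap, hmapspan] at hx
      set Q : Set T := (C.subtype) '' ↑J with hQdef
      have hQC : ∀ q ∈ Q, q ∈ C := by rintro q ⟨y, _, rfl⟩; exact y.2
      have hQmul : ∀ c' ∈ C, ∀ q ∈ Q, c' * q ∈ Q := by
        rintro c' hc' q ⟨y, hy, rfl⟩
        exact ⟨⟨c', hc'⟩ * y, J.mul_mem_left _ hy, rfl⟩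
      have hQ0 : (0:T) ∈ Q := ⟨0, J.zero_mem, rfl⟩
      have hQadd : ∀ a ∈ Q, ∀ b ∈ Q, a + b ∈ Q := by
        rintro a ⟨y, hy, rfl⟩ b ⟨z, hz, rfl⟩
        exact ⟨y + z, J.add_mem hy hz, rfl⟩
      have hsumQ : ∀ (k : ℕ) (f : Fin k → T), (∀ i, f i ∈ Q) → (∑ i, f i) ∈ Q := by
        intro k
        induction k with
        | zero => intro f _; simpa using hQ0
        | succ k ihk =>
            intro f hf
            rw [Fin.sum_univ_castSucc]
            exact hQadd _ (ihk _ fun i => hf _) _ (hf _)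
      obtain ⟨m, r, p, hrS, hpQ, hrep⟩ := decomp hgen Q hQmul _ hx
      obtain ⟨l, b, hb1, hb2, hb3⟩ := steinitz hinv m p
      have hbQ : ∀ i, b i ∈ Q := by
        intro i
        obtain ⟨lam, hlamK, hr'⟩ := hb1 i
        rw [hr']
        exact hsumQ m _ fun j => hQmul _ (hlamK j).2 _ (hpQ j)
      obtain ⟨w, hwS, hwrep⟩ := rebase r p b hrS hb3
      by_cases hxs : SpK Sa Da S b (C.subtype x)
      · obtain ⟨lam, hlamK, hr'⟩ := hxs
        have hmemQ : (C.subtype x) ∈ Q := by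
          rw [hr']
          exact hsumQ l _ fun j => hQmul _ (hlamK j).2 _ (hbQ j)
        obtain ⟨y, hy, hyx⟩ := hmemQ
        have : y = x := Subtype.coe_injective hyx
        rwa [← this]
      · have hlik' := lik_snoc hb2 hxs hinv
        have hsum0 : ∑ i : Fin (l+1),
            (Fin.snoc w (-1 : T) : Fin (l+1) → T) i * (Fin.snoc b (C.subtype x) : Fin (l+1) → T) i = 0 := by
          rw [Fin.sum_univ_castSucc]
          simp only [Fin.snoc_castSucc, Fin.snoc_last]
          rw [neg_one_mul, show (C.subtype x) = ∑ i, w i * b i from hrep.trans hwrep,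
            add_neg_cancel]
        have hCmem : ∀ i, (Fin.snoc b (C.subtype x) : Fin (l+1) → T) i ∈ C := by
          intro i
          refine Fin.lastCases ?_ (fun i' => ?_) i
          · rw [Fin.snoc_last]; exact x.2
          · rw [Fin.snoc_castSucc]; exact hQC _ (hbQ i')
        have hSmem : ∀ i, (Fin.snoc w (-1 : T) : Fin (l+1) → T) i ∈ S := by
          intro i
          refine Fin.lastCases ?_ (fun i' => ?_) i
          · rw [Fin.snoc_last]; exact S.neg_mem S.one_mem
          · rw [Fin.snoc_castSucc]; exact hwS i'
        have hall := indep_strong hSσ hSδ hsimple (l+1) _ hCmem hlik' _ hSmem hsum0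
        have h1 := hall (Fin.last l)
        rw [Fin.snoc_last] at h1
        have h10 : (1:T) = 0 := neg_eq_zero.mp h1
        have hx0 : x = 0 := by
          apply Subtype.ext
          calc (x : T) = (x : T) * 1 := (mul_one _).symm
            _ = (x : T) * 0 := by rw [h10]
            _ = 0 := mul_zero _
        rw [hx0]; exact J.zero_mem
    intro J₁ J₂ h
    have h' : J₁.map C.subtype = J₂.map C.subtype := h
    have := congrArg (Ideal.comap C.subtype) h'
    rwa [cm, cm] at this
  · -- surjectivity / span characterization
    intro I hIσ hIδ
    have hspan : Ideal.span ((I : Set T) ∩ (C : Set T)) = I := by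
      apply le_antisymm
      · rw [Ideal.span_le]; rintro x ⟨hxI, _⟩; exact hxI
      · intro t ht
        obtain ⟨k, s, cc, hsS, hcC, hteq⟩ := hgen t
        rw [hteq]
        exact main_aux hSσ hSδ hsimple hgen I hIσ hIδ k s cc hsS hcC (by rw [← hteq]; exact ht)
    refine ⟨⟨Ideal.comap C.subtype I, ?_⟩, hspan⟩
    have himg : (C.subtype) '' ↑(Ideal.comap C.subtype I) = (I : Set T) ∩ (C : Set T) := by
      ext x
      constructor
      · rintro ⟨y, hy, rfl⟩; exact ⟨hy, y.2⟩
      · rintro ⟨hxI, hxC⟩; exact ⟨⟨x, hxC⟩, hxI, rfl⟩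
    calc I = Ideal.span ((I : Set T) ∩ (C : Set T)) := hspan.symm
      _ = Ideal.span ((C.subtype) '' ↑(Ideal.comap C.subtype I)) := by rw [himg]
      _ = (Ideal.comap C.subtype I).map C.subtype := (hmapspan _).symm
end

section
/- Let R be a σδ-Picard-Vessiot ring over k₀(x) (where σ(x) = x+1, δ(x) = 0) with total ring of fractions 𝒦. Then 𝒦^σ = {a ∈ 𝒦 : σ(a) = a} is a δ-field. In particular, every nonzero σ-invariant element of 𝒦 is a unit: if a ∈ 𝒦^σ, a ≠ 0, then a is not a zero divisor in 𝒦 and is invertible, using that for any zero divisor p of R there is s > 0 with σ(p)σ²(p)⋯σ^s(p) = 0 and that R is reduced. -/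
/-- Let 𝒦 be the total ring of fractions of a reduced σδ-simple ring R in which
every zero divisor p satisfies σ(p)σ²(p)⋯σˢ(p) = 0 for some s ≥ 1. Then the
σ-invariants 𝒦^σ form a δ-field: every nonzero σ-invariant element of 𝒦 is a
non-zero-divisor and has a σ-invariant inverse, and 𝒦^σ is closed under δ. -/
theorem stmt_10 (Q : Type*) [CommRing Q] [Nontrivial Q]
    (σ : Q ≃+* Q) (δ : Derivation ℤ Q Q)
    (hcomm : ∀ a : Q, σ (δ a) = δ (σ a))
    (R : Subring Q)
    (hRσ : ∀ x ∈ R, σ x ∈ R) (hRσ' : ∀ x ∈ R, σ.symm x ∈ R)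
    (hRδ : ∀ x ∈ R, δ x ∈ R)
    -- R is reduced
    (hred : ∀ x ∈ R, ∀ n : ℕ, x ^ n = 0 → x = 0)
    -- Q is the total ring of fractions of R
    (hfrac : ∀ a : Q, ∃ p ∈ R, ∃ q ∈ R, IsUnit q ∧ q * a = p)
    (hnzd : ∀ q ∈ R, (∀ b : Q, q * b = 0 → b = 0) → IsUnit q)
    -- for every zero divisor p of R some product σ(p)⋯σ^s(p) vanishes
    (hzd : ∀ p ∈ R, (∃ b ∈ R, b ≠ 0 ∧ p * b = 0) →
      ∃ s : ℕ, 1 ≤ s ∧ (∏ i ∈ Finset.Icc 1 s, (σ ^ i) p) = 0) :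
    ∀ a : Q, σ a = a → a ≠ 0 →
      (∀ b : Q, a * b = 0 → b = 0) ∧
      (∃ c : Q, σ c = c ∧ a * c = 1) ∧
      σ (δ a) = δ a := by
  intro a hσa ha
  obtain ⟨p, hp, q, hq, hqu, hqa⟩ := hfrac a
  -- σ^i a = a
  have hσia : ∀ i : ℕ, (σ ^ i) a = a := by
    intro i
    induction i with
    | zero => rfl
    | succ n ih =>
      rw [pow_succ]
      show (σ ^ n) (σ a) = a
      rw [hσa, ih]
  have hσip : ∀ i : ℕ, (σ ^ i) p = (σ ^ i) q * a := by
    intro i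
    rw [← hqa, map_mul, hσia]
  -- a is a non-zero-divisor
  have hanzd : ∀ b : Q, a * b = 0 → b = 0 := by
    intro b hab
    by_contra hb
    obtain ⟨p', hp', q', hq', hqu', hqb⟩ := hfrac b
    have hp'ne : p' ≠ 0 := by
      intro h
      rw [h] at hqb
      exact hb ((hqu'.mul_right_eq_zero).mp hqb)
    have hpp' : p * p' = 0 := by
      rw [← hqa, ← hqb]
      calc q * a * (q' * b) = q * q' * (a * b) := by ring
      _ = 0 := by rw [hab, mul_zero]
    obtain ⟨s, hs1, hprod⟩ := hzd p hp ⟨p', hp', hp'ne, hpp'⟩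
    have hprod' : (∏ i ∈ Finset.Icc 1 s, (σ ^ i) q) * a ^ s = 0 := by
      rw [← hprod]
      rw [Finset.prod_congr rfl (fun i _ => hσip i), Finset.prod_mul_distrib,
        Finset.prod_const, Nat.card_Icc]
      simp
    have huprod : IsUnit (∏ i ∈ Finset.Icc 1 s, (σ ^ i) q) := by
      refine Finset.prod_induction _ IsUnit (fun x y hx hy => hx.mul hy) isUnit_one ?_
      intro i _
      exact IsUnit.map ((σ ^ i : Q ≃+* Q) : Q →* Q) hqu
    have has : a ^ s = 0 := (huprod.mul_right_eq_zero).mp hprod'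
    have hps : p ^ s = 0 := by
      rw [← hqa, mul_pow, has, mul_zero]
    have hp0 : p = 0 := hred p hp s hps
    rw [hp0] at hqa
    exact ha (hqu.mul_right_eq_zero.mp hqa)
  refine ⟨hanzd, ?_, by rw [hcomm, hσa]⟩
  -- p is a non-zero-divisor, hence a unit
  have hpnzd : ∀ b : Q, p * b = 0 → b = 0 := by
    intro b hpb
    rw [← hqa] at hpb
    have : a * b = 0 := hqu.mul_right_eq_zero.mp (by rw [← hpb]; ring)
    exact hanzd b this
  have hpu : IsUnit p := hnzd p hp hpnzd
  have hau : IsUnit a := isUnit_of_mul_isUnit_right (hqa ▸ hpu)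
  obtain ⟨u, hu⟩ := hau
  refine ⟨↑u⁻¹, ?_, by rw [← hu]; exact u.mul_inv⟩
  have h1 : a * σ (↑u⁻¹) = 1 := by
    have := congrArg σ (hu ▸ u.mul_inv)
    rwa [map_mul, map_one, hσa] at this
  have h2 : a * (σ (↑u⁻¹) - ↑u⁻¹) = 0 := by
    rw [mul_sub, h1, ← hu, Units.mul_inv, sub_self]
  exact sub_eq_zero.mp (hanzd _ h2)
end

section
/- Let W₀ = I_n and W_s = A(c+s−1)W_{s−1} for s ≥ 1, defining a sequence W = (W₀, W₁, …) of invertible matrices over K; let U ∈ GL_n(K) be a fundamental matrix for δ(Y) = B(c)Y. Then in the σδ-ring Seq_K, the matrix sequence WU satisfies both σ(WU) = A·(WU) and δ(WU) = B·(WU), i.e. WU is a fundamental solution matrix of the full σδ-system inside Seq_K. -/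
lemma map_mul_deriv {K : Type*} [Field K] (δ : Derivation ℤ K K) {n : ℕ}
    (M N : Matrix (Fin n) (Fin n) K) :
    (M * N).map ⇑δ = M.map ⇑δ * N + M * N.map ⇑δ := by
  ext i j
  simp [Matrix.mul_apply, Matrix.map_apply, Finset.sum_add_distrib, mul_comm, add_comm]

/-- With W₀ = I, W_{s+1} = A(c+s)W_s and U a fundamental matrix for
δ(Y) = B(c)Y, the sequence (W_s·U) is a fundamental solution of the full
σδ-system inside Seq_K: its shift satisfies σ(WU) = A·(WU) and componentwise
δ(W_s U) = B(c+s)·(W_s U). -/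
theorem stmt_13 (K : Type*) [Field K] (δ : Derivation ℤ K K) (n : ℕ)
    (A B : ℕ → Matrix (Fin n) (Fin n) K)
    (hA : ∀ s, IsUnit (A s).det)
    (hint : ∀ s, B (s + 1) * A s = (A s).map ⇑δ + A s * B s)
    (W : ℕ → Matrix (Fin n) (Fin n) K)
    (hW0 : W 0 = 1) (hWs : ∀ s, W (s + 1) = A s * W s)
    (U : Matrix (Fin n) (Fin n) K) (hU : IsUnit U.det)
    (hUδ : U.map ⇑δ = B 0 * U) :
    ∀ s, W (s + 1) * U = A s * (W s * U) ∧
      (W s * U).map ⇑δ = B s * (W s * U) ∧ IsUnit (W s * U).det := by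
  have key : ∀ s, (W s * U).map ⇑δ = B s * (W s * U) ∧ IsUnit (W s * U).det := by
    intro s
    induction s with
    | zero => simpa [hW0] using And.intro hUδ hU
    | succ s ih =>
      obtain ⟨hδ, hdet⟩ := ih
      constructor
      · rw [hWs, mul_assoc, map_mul_deriv, hδ, ← mul_assoc (A s), ← add_mul, ← hint,
          mul_assoc]
      · rw [hWs, mul_assoc, Matrix.det_mul]
        exact (hA s).mul hdet
  intro s
  exact ⟨by rw [hWs, mul_assoc], key s⟩
end

section
/- Let C be algebraically closed of characteristic zero, 𝒟 a δ-simple integral domain finitely generated over C = 𝒟^δ, k₀ its fraction field, and 𝔥 ∈ 𝒟[x] nonzero. Then D := 𝒟[x][1/σ^i(𝔥) : i ∈ ℤ] (with σ(x) = x+1) is a simple σδ-ring: if I is a nonzero σδ-ideal of D, then choosing nonzero p ∈ I ∩ 𝒟[x] and s with gcd(p(x), p(x+s)) = 1 in 𝒟[x] yields a nonzero element of I ∩ 𝒟, hence 1 ∈ I by δ-simplicity of 𝒟. -/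
/-- Simplicity of D = 𝒟[x][1/σ^i(𝔥) : i ∈ ℤ]: if 𝒟 is a δ-simple domain,
σ(x) = x+1, x is transcendental over 𝒟, 𝔥 ≠ 0 lies in 𝒟[x], every σ^i(𝔥) is
invertible, and every element of D is a polynomial over 𝒟 in x divided by a
product of the σ^i(𝔥), then D is a simple σδ-ring. -/
theorem stmt_17 (D : Type*) [CommRing D] [IsDomain D] [CharZero D]
    (σ : D ≃+* D) (δ : Derivation ℤ D D)
    (hcomm : ∀ a : D, σ (δ a) = δ (σ a))
    (𝒟 : Subring D)
    (hfix : ∀ a ∈ 𝒟, σ a = a) (hδ𝒟 : ∀ a ∈ 𝒟, δ a ∈ 𝒟)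
    -- 𝒟 is δ-simple
    (hDsimple : ∀ J : Set D, J ⊆ 𝒟 → (0:D) ∈ J →
      (∀ a ∈ J, ∀ b ∈ J, a + b ∈ J) → (∀ d ∈ 𝒟, ∀ a ∈ J, d * a ∈ J) →
      (∀ a ∈ J, δ a ∈ J) → J = {0} ∨ (1:D) ∈ J)
    (x : D) (hσx : σ x = x + 1) (hδx : δ x = 0)
    -- x is transcendental over 𝒟
    (htrans : ∀ p : Polynomial D, (∀ i, p.coeff i ∈ 𝒟) →
      Polynomial.eval x p = 0 → p = 0)
    (h : D) (hh : h ∈ Subring.closure ((𝒟 : Set D) ∪ {x})) (hh0 : h ≠ 0)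
    (hunit : ∀ i : ℤ, IsUnit ((σ ^ i) h))
    -- D is the localization of 𝒟[x] at the σ^i(𝔥)
    (hloc : ∀ a : D, ∃ p ∈ Subring.closure ((𝒟 : Set D) ∪ {x}),
      ∃ u ∈ Submonoid.closure {y : D | ∃ i : ℤ, y = (σ ^ i) h}, u * a = p) :
    ∀ I : Ideal D, (∀ a ∈ I, σ a ∈ I) → (∀ a ∈ I, σ.symm a ∈ I) →
      (∀ a ∈ I, δ a ∈ I) → I = ⊥ ∨ I = ⊤ := by
  intro I hσI hσI' hδI
  by_cases hI : I = ⊥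
  · exact Or.inl hI
  right
  -- get a nonzero element of I
  obtain ⟨a, haI, ha0⟩ : ∃ a ∈ I, a ≠ (0 : D) := by
    by_contra hcon
    push_neg at hcon
    exact hI (le_antisymm (fun y hy => (Ideal.mem_bot).mpr (hcon y hy)) bot_le)
  set f : ↥𝒟 →+* D := 𝒟.subtype with hf
  set φ : Polynomial ↥𝒟 →+* D := Polynomial.eval₂RingHom f x with hφdef
  have hφC : ∀ c : ↥𝒟, φ (Polynomial.C c) = (c : D) := fun c => Polynomial.eval₂_C f x
  have hφX : φ Polynomial.X = x := Polynomial.eval₂_X f x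
  have hσφ : ∀ P : Polynomial ↥𝒟, σ (φ P) = φ (Polynomial.taylor 1 P) := by
    intro P
    have h1 : σ (φ P) = Polynomial.eval₂ ((σ : D →+* D).comp f) (σ x) P :=
      Polynomial.hom_eval₂ P f (σ : D →+* D) x
    have h2 : (σ : D →+* D).comp f = f := RingHom.ext fun c => hfix c c.2
    rw [h1, h2, hσx, Polynomial.taylor_apply]
    show _ = Polynomial.eval₂ f x (P.comp (Polynomial.X + Polynomial.C 1))
    rw [Polynomial.eval₂_comp]
    simp
  -- key induction on degree
  have hkey : ∀ n : ℕ, ∀ P : Polynomial ↥𝒟, P.natDegree = n → P ≠ 0 → φ P ∈ I →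
      ∃ d : D, d ≠ 0 ∧ d ∈ 𝒟 ∧ d ∈ I := by
    intro n
    induction n using Nat.strong_induction_on with
    | _ n ih =>
      intro P hdeg hP0 hPI
      match n, hdeg with
      | 0, hdeg =>
        have hPC := Polynomial.eq_C_of_natDegree_eq_zero hdeg
        refine ⟨φ P, ?_, ?_, hPI⟩
        · intro hz
          apply hP0
          rw [hPC, hφC] at hz
          rw [hPC, show P.coeff 0 = 0 from (ZeroMemClass.coe_eq_zero).mp hz, map_zero]
        · rw [hPC, hφC]; exact (P.coeff 0).2
      | (m+1), hdeg =>
        have hlead : P.coeff (m+1) ≠ 0 := by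
          rw [← hdeg]
          exact Polynomial.leadingCoeff_ne_zero.mpr hP0
        set Q : Polynomial ↥𝒟 := Polynomial.taylor 1 P - P with hQdef
        -- coefficient m of Q
        have htc : ∀ k : ℕ, (Polynomial.taylor (1 : ↥𝒟) P).coeff k =
            (Polynomial.hasseDeriv k P).eval 1 := fun k => Polynomial.taylor_coeff 1 P k
        have hQm : Q.coeff m = ((m+1 : ℕ) : ↥𝒟) * P.coeff (m+1) := by
          have hdle : (Polynomial.hasseDeriv m P).natDegree < 2 := by
            have := Polynomial.natDegree_hasseDeriv_le P m
            omega
          have he : (Polynomial.hasseDeriv m P).eval 1 =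
              ∑ i ∈ Finset.range 2, (Polynomial.hasseDeriv m P).coeff i * 1 ^ i :=
            Polynomial.eval_eq_sum_range' hdle 1
          rw [hQdef, Polynomial.coeff_sub, htc, he]
          simp [Polynomial.hasseDeriv_coeff, Finset.sum_range_succ,
            Nat.choose_succ_self_right, Nat.add_comm 1 m]
        have hQtop : Q.coeff (m+1) = 0 := by
          have hdle : (Polynomial.hasseDeriv (m+1) P).natDegree < 1 := by
            have := Polynomial.natDegree_hasseDeriv_le P (m+1)
            omega
          have he : (Polynomial.hasseDeriv (m+1) P).eval 1 =
              ∑ i ∈ Finset.range 1, (Polynomial.hasseDeriv (m+1) P).coeff i * 1 ^ i :=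
            Polynomial.eval_eq_sum_range' hdle 1
          rw [hQdef, Polynomial.coeff_sub, htc, he]
          simp [Polynomial.hasseDeriv_coeff]
        have hQ0 : Q ≠ 0 := by
          intro hz
          have : Q.coeff m = 0 := by rw [hz]; simp
          rw [hQm] at this
          have hD : ((m+1 : ℕ) : D) * ((P.coeff (m+1) : D)) = 0 := by
            have := congrArg f this
            simpa [f] using this
          rcases mul_eq_zero.mp hD with hc | hc
          · exact Nat.cast_ne_zero.mpr (Nat.succ_ne_zero m) hc
          · exact hlead ((ZeroMemClass.coe_eq_zero).mp hc)
        have hQdeg : Q.natDegree < m + 1 := by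
          have h1 : Q.natDegree ≤ m + 1 := by
            have := Polynomial.natDegree_sub_le (Polynomial.taylor 1 P) P
            rw [Polynomial.natDegree_taylor, hdeg] at this
            simpa using this
          rcases lt_or_eq_of_le h1 with hlt | heq
          · exact hlt
          · exfalso
            apply hQ0
            have : Q.leadingCoeff = 0 := by
              rw [Polynomial.leadingCoeff, heq, hQtop]
            exact Polynomial.leadingCoeff_eq_zero.mp this
        have hQI : φ Q ∈ I := by
          have : φ Q = σ (φ P) - φ P := by
            rw [hσφ, hQdef, map_sub]
          rw [this]
          exact I.sub_mem (hσI _ hPI) hPI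
        exact ih Q.natDegree (by omega) Q rfl hQ0 hQI
  -- produce a nonzero element of I ∩ 𝒟[x]
  obtain ⟨p, hpcl, u, hu, hua⟩ := hloc a
  have huu : IsUnit u := by
    refine Submonoid.closure_induction (fun y hy => ?_) isUnit_one
      (fun y z _ _ hy hz => hy.mul hz) hu
    obtain ⟨i, rfl⟩ := hy
    exact hunit i
  have hp0 : p ≠ 0 := by
    rw [← hua]
    exact mul_ne_zero huu.ne_zero ha0
  have hpI : p ∈ I := by
    rw [← hua]
    exact I.mul_mem_left u haI
  -- p is in the range of φ
  have hrange : Subring.closure ((𝒟 : Set D) ∪ {x}) ≤ φ.range := by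
    rw [Subring.closure_le]
    rintro y (hy | hy)
    · exact ⟨Polynomial.C ⟨y, hy⟩, hφC _⟩
    · rw [Set.mem_singleton_iff.mp hy]
      exact ⟨Polynomial.X, hφX⟩
  obtain ⟨P, hφP⟩ := hrange hpcl
  have hP0 : P ≠ 0 := by
    intro hz
    rw [hz, map_zero] at hφP
    exact hp0 hφP.symm
  obtain ⟨d, hd0, hd𝒟, hdI⟩ := hkey P.natDegree P rfl hP0 (hφP ▸ hpI)
  -- δ-simplicity of 𝒟 finishes
  have := hDsimple {y : D | y ∈ 𝒟 ∧ y ∈ I}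
    (fun y hy => hy.1) ⟨𝒟.zero_mem, I.zero_mem⟩
    (fun b hb c hc => ⟨𝒟.add_mem hb.1 hc.1, I.add_mem hb.2 hc.2⟩)
    (fun e he b hb => ⟨𝒟.mul_mem he hb.1, I.mul_mem_left e hb.2⟩)
    (fun b hb => ⟨hδ𝒟 b hb.1, hδI b hb.2⟩)
  rcases this with hJ | hJ
  · exfalso
    have : d ∈ ({0} : Set D) := hJ ▸ (⟨hd𝒟, hdI⟩ : d ∈ {y : D | y ∈ 𝒟 ∧ y ∈ I})
    exact hd0 this
  · exact (Ideal.eq_top_iff_one I).mpr hJ.2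
end
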